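/- arXiv:1904.06691 — 3 statements merged into one kernel-verified Lean document; each statement's English description precedes it below -/
import Mathlib

section
/- Let (X_t)_{t≥1} be a strictly stationary sequence of real random variables with absolute regularity (β-mixing) coefficient β(m). Let H_1, …, H_s be finite nonempty sets of natural numbers such that max{i : i ∈ H_k} + m < min{i : i ∈ H_{k+1}} for k = 1,…,s−1, write X(H_k) = (X_i : i ∈ H_k), and let X̃(H_1), …, X̃(H_s) be mutually independent random vectors such that X̃(H_k) has the same distribution as X(H_k) for each k. Then for every measurable function h of the variables (x_i : i ∈ H_1 ∪ … ∪ H_s) bounded in absolute value by a constant F, | E h(X(H_1),…,X(H_s)) − E h(X̃(H_1),…,X̃(H_s)) | ≤ 4 s F β(m). -/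
open MeasureTheory ProbabilityTheory Filter Set

set_option linter.unusedSectionVars false

noncomputable section

/-- The σ-algebra generated by the random variables `X i`, `i ∈ s`. -/
def sigmaGen {Ω : Type*} (X : ℕ → Ω → ℝ) (s : Set ℕ) : MeasurableSpace Ω :=
  ⨆ i ∈ s, MeasurableSpace.comap (X i) inferInstance

/-- The absolute regularity (β-mixing) coefficient of the sequence `(X t)_{t ≥ 1}`:
`β(m) = sup_{t ≥ 1} sup (1/2) ∑_{i,j} |P(A i ∩ B j) - P(A i) P(B j)|`, the inner supremum
being over finite partitions `{A i}` measurable w.r.t. `σ(X 1, …, X t)` and finite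
partitions `{B j}` measurable w.r.t. `σ(X s : s ≥ t + m)`. -/
def betaMixing {Ω : Type*} [MeasurableSpace Ω] (μ : Measure Ω) (X : ℕ → Ω → ℝ)
    (m : ℕ) : ℝ :=
  ⨆ t : ℕ, sSup {c : ℝ |
    ∃ (K L : ℕ) (A : Fin K → Set Ω) (B : Fin L → Set Ω),
      (∀ i, MeasurableSet[sigmaGen X (Set.Icc 1 (t + 1))] (A i)) ∧
      (∀ j, MeasurableSet[sigmaGen X (Set.Ici (t + 1 + m))] (B j)) ∧
      Pairwise (Function.onFun Disjoint A) ∧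
      Pairwise (Function.onFun Disjoint B) ∧
      (⋃ i, A i) = Set.univ ∧ (⋃ j, B j) = Set.univ ∧
      c = (1 / 2) * ∑ i : Fin K, ∑ j : Fin L,
        |(μ (A i ∩ B j)).toReal - (μ (A i)).toReal * (μ (B j)).toReal|}

/-- A sequence of real random variables is strictly stationary if all its
finite-dimensional distributions are invariant under index shifts. -/
def IsStrictlyStationary {Ω : Type*} [MeasurableSpace Ω] (μ : Measure Ω)
    (X : ℕ → Ω → ℝ) : Prop :=
  ∀ (τ k : ℕ) (t : Fin k → ℕ), (∀ i, 1 ≤ t i) →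
    μ.map (fun ω i => X (t i + τ) ω) = μ.map (fun ω i => X (t i) ω)

namespace YoshiharaAux

/-! ### Atoms of a finite family of sets -/

variable {α : Type*} {n : ℕ}

/-- The pattern of a point w.r.t. a family of sets. -/
def patt (A : Fin n → Set α) (x : α) : Fin n → Bool :=
  fun i => decide (x ∈ A i) (h := Classical.dec _)

/-- The atom of a family of sets corresponding to a pattern `f`. -/
def atom (A : Fin n → Set α) (f : Fin n → Bool) : Set α :=
  {x | patt A x = f}

lemma mem_atom {A : Fin n → Set α} {f : Fin n → Bool} {x : α} :
    x ∈ atom A f ↔ patt A x = f := Iff.rfl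

lemma patt_apply_iff {A : Fin n → Set α} {x : α} {i : Fin n} :
    patt A x i = true ↔ x ∈ A i := by
  simp [patt]

lemma atom_eq_inter (A : Fin n → Set α) (f : Fin n → Bool) :
    atom A f = ⋂ i, (if f i then A i else (A i)ᶜ) := by
  ext x
  simp only [atom, mem_setOf_eq, mem_iInter, funext_iff]
  refine forall_congr' fun i => ?_
  cases hf : f i <;> simp [patt, hf]

lemma measurableSet_atom [MeasurableSpace α] {A : Fin n → Set α}
    (hA : ∀ i, MeasurableSet (A i)) (f : Fin n → Bool) :
    MeasurableSet (atom A f) := by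
  rw [atom_eq_inter]
  exact MeasurableSet.iInter fun i => by
    split <;> [exact hA i; exact (hA i).compl]

lemma pairwise_disjoint_atom (A : Fin n → Set α) :
    Pairwise (Function.onFun Disjoint (atom A)) := by
  intro f g hfg
  refine Set.disjoint_left.2 fun x hxf hxg => hfg ?_
  rw [mem_atom] at hxf hxg
  rw [← hxf, ← hxg]

lemma iUnion_atom (A : Fin n → Set α) : (⋃ f, atom A f) = univ := by
  ext x
  simp only [mem_iUnion, mem_univ, iff_true]
  exact ⟨patt A x, rfl⟩

lemma patt_preimage {β : Type*} (ξ : β → α) (A : Fin n → Set α) (x : β) :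
    patt (fun i => ξ ⁻¹' A i) x = patt A (ξ x) := by
  funext i
  simp only [patt]
  exact decide_eq_decide.mpr Iff.rfl

lemma preimage_atom {β : Type*} (ξ : β → α) (A : Fin n → Set α) (f : Fin n → Bool) :
    ξ ⁻¹' atom A f = atom (fun i => ξ ⁻¹' A i) f := by
  ext x
  simp only [mem_preimage, mem_atom, patt_preimage]

/-! ### The algebra of finite unions of measurable rectangles -/

variable {γ : Type*} [MeasurableSpace α] [MeasurableSpace γ]

/-- Sets of the product that are described by the patterns of the two coordinates with respect
to finite families of measurable sets. These are exactly the finite unions of measurable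
rectangles. -/
def rectAlg (α γ : Type*) [MeasurableSpace α] [MeasurableSpace γ] : Set (Set (α × γ)) :=
  {E | ∃ (n : ℕ) (A : Fin n → Set α) (B : Fin n → Set γ)
      (S : Set ((Fin n → Bool) × (Fin n → Bool))),
    (∀ i, MeasurableSet (A i)) ∧ (∀ i, MeasurableSet (B i)) ∧
    E = {z : α × γ | (patt A z.1, patt B z.2) ∈ S}}

lemma rectAlg_eq_biUnion {n : ℕ} (A : Fin n → Set α) (B : Fin n → Set γ)
    (S : Set ((Fin n → Bool) × (Fin n → Bool))) :
    {z : α × γ | (patt A z.1, patt B z.2) ∈ S}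
      = ⋃ p ∈ S, atom A p.1 ×ˢ atom B p.2 := by
  ext z
  simp only [mem_setOf_eq, mem_iUnion, Set.mem_prod, mem_atom]
  constructor
  · intro hz
    exact ⟨(patt A z.1, patt B z.2), hz, rfl, rfl⟩
  · rintro ⟨p, hp, h1, h2⟩
    rwa [h1, h2]

lemma measurableSet_of_mem_rectAlg {E : Set (α × γ)} (hE : E ∈ rectAlg α γ) :
    MeasurableSet E := by
  obtain ⟨n, A, B, S, hA, hB, rfl⟩ := hE
  rw [rectAlg_eq_biUnion]
  exact MeasurableSet.biUnion (Set.to_countable S) fun p _ =>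
    (measurableSet_atom hA p.1).prod (measurableSet_atom hB p.2)

lemma isSetAlgebra_rectAlg : IsSetAlgebra (rectAlg α γ) where
  empty_mem := ⟨0, (fun _ => ∅), (fun _ => ∅), ∅, fun i => i.elim0, fun i => i.elim0, by
    ext z; simp⟩
  compl_mem := by
    rintro E ⟨n, A, B, S, hA, hB, rfl⟩
    exact ⟨n, A, B, Sᶜ, hA, hB, by ext z; simp⟩
  union_mem := by
    rintro E E' ⟨n, A, B, S, hA, hB, rfl⟩ ⟨n', A', B', S', hA', hB', rfl⟩
    refine ⟨n + n', Fin.append A A', Fin.append B B',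
      {p | ((fun i => p.1 (Fin.castAdd n' i)), (fun i => p.2 (Fin.castAdd n' i))) ∈ S ∨
        ((fun i => p.1 (Fin.natAdd n i)), (fun i => p.2 (Fin.natAdd n i))) ∈ S'},
      fun i => ?_, fun i => ?_, ?_⟩
    · induction i using Fin.addCases with
      | left j => rw [Fin.append_left]; exact hA j
      | right j => rw [Fin.append_right]; exact hA' j
    · induction i using Fin.addCases with
      | left j => rw [Fin.append_left]; exact hB j
      | right j => rw [Fin.append_right]; exact hB' j
    · ext z
      have h1 : ∀ (x : α) i, patt (Fin.append A A') x (Fin.castAdd n' i) = patt A x i := by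
        intro x i; simp only [patt]
        exact decide_eq_decide.mpr (by rw [Fin.append_left])
      have h2 : ∀ (x : α) i, patt (Fin.append A A') x (Fin.natAdd n i) = patt A' x i := by
        intro x i; simp only [patt]
        exact decide_eq_decide.mpr (by rw [Fin.append_right])
      have h3 : ∀ (y : γ) i, patt (Fin.append B B') y (Fin.castAdd n' i) = patt B y i := by
        intro y i; simp only [patt]
        exact decide_eq_decide.mpr (by rw [Fin.append_left])
      have h4 : ∀ (y : γ) i, patt (Fin.append B B') y (Fin.natAdd n i) = patt B' y i := by
        intro y i; simp only [patt]
        exact decide_eq_decide.mpr (by rw [Fin.append_right])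
      simp only [Set.mem_union, mem_setOf_eq, h1, h2, h3, h4]

lemma prod_mem_rectAlg {A : Set α} {B : Set γ} (hA : MeasurableSet A)
    (hB : MeasurableSet B) : A ×ˢ B ∈ rectAlg α γ := by
  refine ⟨1, fun _ => A, fun _ => B, {p | p.1 0 = true ∧ p.2 0 = true},
    fun _ => hA, fun _ => hB, ?_⟩
  ext z
  simp [Set.mem_prod, patt_apply_iff, patt]

lemma generateFrom_rectAlg :
    MeasurableSpace.generateFrom (rectAlg α γ) = Prod.instMeasurableSpace := by
  refine le_antisymm (MeasurableSpace.generateFrom_le fun E hE =>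
    measurableSet_of_mem_rectAlg hE) ?_
  rw [← generateFrom_prod]
  refine MeasurableSpace.generateFrom_le fun E hE => ?_
  obtain ⟨A, hA, B, hB, rfl⟩ := hE
  exact MeasurableSpace.measurableSet_generateFrom (prod_mem_rectAlg hA hB)

/-! ### Elementary sum lemmas -/

lemma abs_sum_subset_le {ι : Type*} [Fintype ι] (d : ι → ℝ) (htot : ∑ i, d i = 0)
    (T : Finset ι) : |∑ i ∈ T, d i| ≤ (1/2) * ∑ i, |d i| := by
  have key : ∀ T' : Finset ι, ∑ i ∈ T', d i ≤ (1/2) * ∑ i, |d i| := by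
    intro T'
    have h1 : ∑ i ∈ T', (|d i| + d i) ≤ ∑ i, (|d i| + d i) :=
      Finset.sum_le_sum_of_subset_of_nonneg (Finset.subset_univ T')
        (fun i _ _ => by linarith [neg_abs_le (d i)])
    have h2 : ∑ i ∈ T', (d i + d i) ≤ ∑ i ∈ T', (|d i| + d i) := by
      refine Finset.sum_le_sum fun i _ => ?_
      linarith [le_abs_self (d i)]
    have h2' : ∑ i ∈ T', (d i + d i) = 2 * ∑ i ∈ T', d i := by
      rw [Finset.sum_add_distrib]; ring
    have h3 : ∑ i, (|d i| + d i) = ∑ i, |d i| := by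
      rw [Finset.sum_add_distrib, htot, add_zero]
    linarith
  classical
  rw [abs_le]
  constructor
  · have h4 : ∑ i ∈ Finset.univ \ T, d i ≤ (1/2) * ∑ i, |d i| := key _
    have h5 : ∑ i ∈ T, d i + ∑ i ∈ Finset.univ \ T, d i = 0 := by
      rw [Finset.sum_sdiff_eq_sub (Finset.subset_univ T)]
      linarith [htot]
    linarith
  · exact key T

section PartitionSums

variable {Ω : Type*} [MeasurableSpace Ω] {μ : Measure Ω} [IsProbabilityMeasure μ]

lemma sum_measure_partition {ι : Type*} [Fintype ι] {A : ι → Set Ω}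
    (hA : ∀ i, MeasurableSet (A i)) (hd : Pairwise (Function.onFun Disjoint A))
    (hu : (⋃ i, A i) = univ) : ∑ i, (μ (A i)).toReal = 1 := by
  have h := measure_iUnion hd hA (μ := μ)
  rw [hu, measure_univ, tsum_fintype] at h
  rw [← ENNReal.toReal_sum (fun a _ => measure_ne_top μ _), ← h, ENNReal.toReal_one]

lemma pairwise_disjoint_inter_prod {ι κ : Type*} {A : ι → Set Ω} {B : κ → Set Ω}
    (hA : Pairwise (Function.onFun Disjoint A)) (hB : Pairwise (Function.onFun Disjoint B)) :
    Pairwise (Function.onFun Disjoint (fun p : ι × κ => A p.1 ∩ B p.2)) := by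
  intro p q hpq
  rcases (by
    by_contra hcon
    push_neg at hcon
    exact hpq (Prod.ext hcon.1 hcon.2) : p.1 ≠ q.1 ∨ p.2 ≠ q.2) with h | h
  · exact Disjoint.mono inter_subset_left inter_subset_left (hA h)
  · exact Disjoint.mono inter_subset_right inter_subset_right (hB h)

lemma iUnion_inter_prod {ι κ : Type*} {A : ι → Set Ω} {B : κ → Set Ω}
    (huA : (⋃ i, A i) = univ) (huB : (⋃ j, B j) = univ) :
    (⋃ p : ι × κ, A p.1 ∩ B p.2) = univ := by
  ext x
  simp only [mem_iUnion, mem_univ, iff_true]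
  have hx1 : x ∈ ⋃ i, A i := huA ▸ mem_univ x
  have hx2 : x ∈ ⋃ j, B j := huB ▸ mem_univ x
  obtain ⟨i, hi⟩ := mem_iUnion.1 hx1
  obtain ⟨j, hj⟩ := mem_iUnion.1 hx2
  exact ⟨(i, j), hi, hj⟩

lemma sum_measure_partition_inter {ι κ : Type*} [Fintype ι] [Fintype κ]
    {A : ι → Set Ω} {B : κ → Set Ω}
    (hA : ∀ i, MeasurableSet (A i)) (hB : ∀ j, MeasurableSet (B j))
    (hdA : Pairwise (Function.onFun Disjoint A)) (hdB : Pairwise (Function.onFun Disjoint B))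
    (huA : (⋃ i, A i) = univ) (huB : (⋃ j, B j) = univ) :
    ∑ p : ι × κ, (μ (A p.1 ∩ B p.2)).toReal = 1 :=
  sum_measure_partition (fun p => (hA p.1).inter (hB p.2))
    (pairwise_disjoint_inter_prod hdA hdB) (iUnion_inter_prod huA huB)

end PartitionSums

/-! ### The abstract beta bound -/

/-- `betaBound μ m₁ m₂ b` says that `b` dominates the partition-based dependence
coefficient between the σ-algebras `m₁` and `m₂`. -/
def betaBound {Ω : Type*} [MeasurableSpace Ω] (μ : Measure Ω)
    (m₁ m₂ : MeasurableSpace Ω) (b : ℝ) : Prop :=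
  ∀ (ι κ : Type) [Fintype ι] [Fintype κ] (A : ι → Set Ω) (B : κ → Set Ω),
    (∀ i, MeasurableSet[m₁] (A i)) → (∀ j, MeasurableSet[m₂] (B j)) →
    Pairwise (Function.onFun Disjoint A) → Pairwise (Function.onFun Disjoint B) →
    (⋃ i, A i) = univ → (⋃ j, B j) = univ →
    (1/2) * ∑ i, ∑ j, |(μ (A i ∩ B j)).toReal - (μ (A i)).toReal * (μ (B j)).toReal| ≤ b

section Core

variable {Ω α γ : Type*} {m₁ m₂ : MeasurableSpace Ω}
  [mΩ : MeasurableSpace Ω] [MeasurableSpace α] [MeasurableSpace γ]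
  {μ : Measure Ω} [IsProbabilityMeasure μ]
  {ξ : Ω → α} {η : Ω → γ} {b : ℝ}

/-- The grid bound: for a set in the rectangle algebra, the difference between the joint
law and the product law is bounded by `b`. -/
lemma grid_bound (hm₁ : m₁ ≤ mΩ) (hm₂ : m₂ ≤ mΩ)
    (hb : betaBound μ m₁ m₂ b)
    (hξ : Measurable[m₁] ξ) (hη : Measurable[m₂] η)
    {E : Set (α × γ)} (hE : E ∈ rectAlg α γ) :
    |(μ.map (fun ω => (ξ ω, η ω)) E).toReal - ((μ.map ξ).prod (μ.map η) E).toReal| ≤ b := by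
  have hξ' : Measurable ξ := hξ.mono hm₁ le_rfl
  have hη' : Measurable η := hη.mono hm₂ le_rfl
  have hζ : Measurable (fun ω => (ξ ω, η ω)) := hξ'.prodMk hη'
  obtain ⟨n, A, B, S, hA, hB, rfl⟩ := hE
  -- the families of atoms, pulled back to `Ω`
  set A' : (Fin n → Bool) → Set Ω := fun f => ξ ⁻¹' atom A f with hA'def
  set B' : (Fin n → Bool) → Set Ω := fun g => η ⁻¹' atom B g with hB'def
  have hA'meas : ∀ f, MeasurableSet[m₁] (A' f) := fun f => hξ (measurableSet_atom hA f)
  have hB'meas : ∀ g, MeasurableSet[m₂] (B' g) := fun g => hη (measurableSet_atom hB g)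
  have hA'meas' : ∀ f, MeasurableSet (A' f) := fun f => hm₁ _ (hA'meas f)
  have hB'meas' : ∀ g, MeasurableSet (B' g) := fun g => hm₂ _ (hB'meas g)
  have hA'disj : Pairwise (Function.onFun Disjoint A') :=
    fun f g hfg => Disjoint.preimage ξ (pairwise_disjoint_atom A hfg)
  have hB'disj : Pairwise (Function.onFun Disjoint B') :=
    fun f g hfg => Disjoint.preimage η (pairwise_disjoint_atom B hfg)
  have hA'univ : (⋃ f, A' f) = univ := by
    rw [hA'def, ← Set.preimage_iUnion, iUnion_atom, Set.preimage_univ]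
  have hB'univ : (⋃ g, B' g) = univ := by
    rw [hB'def, ← Set.preimage_iUnion, iUnion_atom, Set.preimage_univ]
  -- the finset of patterns in `S`
  set Sfin : Finset ((Fin n → Bool) × (Fin n → Bool)) := (Set.toFinite S).toFinset with hSfin
  have hScoe : S = (Sfin : Set _) := by rw [hSfin, Set.Finite.coe_toFinset]
  set d : (Fin n → Bool) × (Fin n → Bool) → ℝ :=
    fun p => (μ (A' p.1 ∩ B' p.2)).toReal - (μ (A' p.1)).toReal * (μ (B' p.2)).toReal with hd
  -- compute the joint measure
  have hπ : (μ.map (fun ω => (ξ ω, η ω)) {z : α × γ | (patt A z.1, patt B z.2) ∈ S}).toReal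
      = ∑ p ∈ Sfin, (μ (A' p.1 ∩ B' p.2)).toReal := by
    rw [rectAlg_eq_biUnion, hScoe, Finset.set_biUnion_coe,
      Measure.map_apply hζ (Sfin.measurableSet_biUnion fun p _ =>
        (measurableSet_atom hA p.1).prod (measurableSet_atom hB p.2))]
    rw [Set.preimage_iUnion₂]
    have hpre : ∀ p : (Fin n → Bool) × (Fin n → Bool),
        (fun ω => (ξ ω, η ω)) ⁻¹' (atom A p.1 ×ˢ atom B p.2) = A' p.1 ∩ B' p.2 :=
      fun p => Set.mk_preimage_prod (f := ξ) (g := η)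
    simp_rw [hpre]
    rw [measure_biUnion_finset ?_ (fun p _ => (hA'meas' p.1).inter (hB'meas' p.2))]
    · exact ENNReal.toReal_sum fun p _ => measure_ne_top μ _
    · intro p _ q _ hpq
      exact pairwise_disjoint_inter_prod hA'disj hB'disj hpq
  -- compute the product measure
  have hρ : ((μ.map ξ).prod (μ.map η) {z : α × γ | (patt A z.1, patt B z.2) ∈ S}).toReal
      = ∑ p ∈ Sfin, (μ (A' p.1)).toReal * (μ (B' p.2)).toReal := by
    haveI : IsProbabilityMeasure (μ.map ξ) := Measure.isProbabilityMeasure_map hξ'.aemeasurable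
    haveI : IsProbabilityMeasure (μ.map η) := Measure.isProbabilityMeasure_map hη'.aemeasurable
    rw [rectAlg_eq_biUnion, hScoe, Finset.set_biUnion_coe]
    rw [measure_biUnion_finset ?_ (fun p _ =>
      (measurableSet_atom hA p.1).prod (measurableSet_atom hB p.2))]
    · rw [ENNReal.toReal_sum fun p _ => measure_ne_top _ _]
      refine Finset.sum_congr rfl fun p _ => ?_
      rw [Measure.prod_prod, ENNReal.toReal_mul,
        Measure.map_apply hξ' (measurableSet_atom hA p.1),
        Measure.map_apply hη' (measurableSet_atom hB p.2)]
    · intro p _ q _ hpq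
      have h1 : Disjoint (atom A p.1) (atom A q.1) ∨ Disjoint (atom B p.2) (atom B q.2) := by
        rcases (by
          by_contra hcon
          push_neg at hcon
          exact hpq (Prod.ext hcon.1 hcon.2) : p.1 ≠ q.1 ∨ p.2 ≠ q.2) with h | h
        · exact Or.inl (pairwise_disjoint_atom A h)
        · exact Or.inr (pairwise_disjoint_atom B h)
      rcases h1 with h | h
      · exact Set.disjoint_left.2 fun z hz hz' => Set.disjoint_left.1 h hz.1 hz'.1
      · exact Set.disjoint_left.2 fun z hz hz' => Set.disjoint_left.1 h hz.2 hz'.2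
  rw [hπ, hρ, ← Finset.sum_sub_distrib]
  have htot : ∑ p : (Fin n → Bool) × (Fin n → Bool), d p = 0 := by
    rw [hd]
    rw [Finset.sum_sub_distrib]
    rw [sum_measure_partition_inter hA'meas' hB'meas' hA'disj hB'disj hA'univ hB'univ]
    have : ∑ p : (Fin n → Bool) × (Fin n → Bool), (μ (A' p.1)).toReal * (μ (B' p.2)).toReal
        = (∑ f, (μ (A' f)).toReal) * (∑ g, (μ (B' g)).toReal) := by
      rw [Finset.sum_mul_sum, Fintype.sum_prod_type]
    rw [this, sum_measure_partition hA'meas' hA'disj hA'univ,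
      sum_measure_partition hB'meas' hB'disj hB'univ]
    norm_num
  calc |∑ p ∈ Sfin, d p| ≤ (1/2) * ∑ p : (Fin n → Bool) × (Fin n → Bool), |d p| :=
        abs_sum_subset_le d htot Sfin
    _ = (1/2) * ∑ f, ∑ g, |(μ (A' f ∩ B' g)).toReal - (μ (A' f)).toReal * (μ (B' g)).toReal| := by
        rw [Fintype.sum_prod_type]
    _ ≤ b := hb _ _ A' B' hA'meas hB'meas hA'disj hB'disj hA'univ hB'univ

/-- For a probability (or finite) measure, measures of two sets differ by at most the
measure of the symmetric difference. -/
lemma abs_toReal_sub_le_symmDiff {ν : Measure (α × γ)} [IsFiniteMeasure ν]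
    (C E : Set (α × γ)) :
    |(ν C).toReal - (ν E).toReal| ≤ (ν (symmDiff C E)).toReal := by
  have key : ∀ C' E' : Set (α × γ), (ν C').toReal - (ν E').toReal ≤ (ν (symmDiff C' E')).toReal := by
    intro C' E'
    have hsub : C' ⊆ E' ∪ symmDiff C' E' := by
      intro x hx
      by_cases hxE : x ∈ E'
      · exact Or.inl hxE
      · exact Or.inr (Or.inl ⟨hx, hxE⟩)
    have h1 : ν C' ≤ ν E' + ν (symmDiff C' E') :=
      le_trans (measure_mono hsub) (measure_union_le _ _)
    have h2 : (ν C').toReal ≤ (ν E').toReal + (ν (symmDiff C' E')).toReal := by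
      rw [← ENNReal.toReal_add (measure_ne_top ν _) (measure_ne_top ν _)]
      exact ENNReal.toReal_mono (by finiteness) h1
    linarith
  rw [abs_sub_le_iff]
  exact ⟨key C E, by rw [symmDiff_comm]; exact key E C⟩

/-- The key measure-theoretic bound: the difference between the joint law and the product law
on an arbitrary measurable set is bounded by `b`. -/
lemma set_bound (hm₁ : m₁ ≤ mΩ) (hm₂ : m₂ ≤ mΩ)
    (hb : betaBound μ m₁ m₂ b)
    (hξ : Measurable[m₁] ξ) (hη : Measurable[m₂] η)
    {C : Set (α × γ)} (hC : MeasurableSet C) :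
    |(μ.map (fun ω => (ξ ω, η ω)) C).toReal - ((μ.map ξ).prod (μ.map η) C).toReal| ≤ b := by
  have hξ' : Measurable ξ := hξ.mono hm₁ le_rfl
  have hη' : Measurable η := hη.mono hm₂ le_rfl
  have hζ : Measurable (fun ω => (ξ ω, η ω)) := hξ'.prodMk hη'
  set π : Measure (α × γ) := μ.map (fun ω => (ξ ω, η ω)) with hπdef
  haveI : IsProbabilityMeasure π := Measure.isProbabilityMeasure_map hζ.aemeasurable
  haveI : IsProbabilityMeasure (μ.map ξ) := Measure.isProbabilityMeasure_map hξ'.aemeasurable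
  haveI : IsProbabilityMeasure (μ.map η) := Measure.isProbabilityMeasure_map hη'.aemeasurable
  set ρ : Measure (α × γ) := (μ.map ξ).prod (μ.map η) with hρdef
  refine le_of_forall_pos_le_add fun ε hε => ?_
  have hdense : (π + ρ).MeasureDense (rectAlg α γ) :=
    Measure.MeasureDense.of_generateFrom_isSetAlgebra_finite _ isSetAlgebra_rectAlg
      generateFrom_rectAlg.symm
  obtain ⟨E, hE, hCE⟩ := hdense.approx C hC (measure_ne_top _ _) ε hε
  have hπCE : (π (symmDiff C E)).toReal + (ρ (symmDiff C E)).toReal ≤ ε := by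
    have h1 : π (symmDiff C E) + ρ (symmDiff C E) ≤ ENNReal.ofReal ε := by
      rw [← Measure.add_apply]
      exact hCE.le
    have h2 := ENNReal.toReal_mono ENNReal.ofReal_ne_top h1
    rw [ENNReal.toReal_add (measure_ne_top _ _) (measure_ne_top _ _)] at h2
    rwa [ENNReal.toReal_ofReal hε.le] at h2
  have hgrid := grid_bound hm₁ hm₂ hb hξ hη hE
  have h3 : |(π C).toReal - (π E).toReal| ≤ (π (symmDiff C E)).toReal :=
    abs_toReal_sub_le_symmDiff C E
  have h4 : |(ρ C).toReal - (ρ E).toReal| ≤ (ρ (symmDiff C E)).toReal :=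
    abs_toReal_sub_le_symmDiff C E
  have hgrid' := hgrid
  rw [← hπdef, ← hρdef] at hgrid'
  have e3 := abs_le.1 h3
  have e4 := abs_le.1 h4
  have e5 := abs_le.1 hgrid'
  rw [abs_le]
  constructor <;> linarith [hπCE]

/-- The pair lemma: replacing a pair of random variables, measurable w.r.t. `m₁` and `m₂`
respectively, by an independent pair with the same marginals changes the expectation of a
bounded measurable function by at most `2 F b`. -/
lemma pair_bound (hm₁ : m₁ ≤ mΩ) (hm₂ : m₂ ≤ mΩ)
    (hb : betaBound μ m₁ m₂ b)
    (hξ : Measurable[m₁] ξ) (hη : Measurable[m₂] η)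
    (g : α × γ → ℝ) (hg : Measurable g) (F : ℝ) (hF : ∀ z, |g z| ≤ F) (hF0 : 0 ≤ F) :
    |∫ ω, g (ξ ω, η ω) ∂μ - ∫ z, g z ∂((μ.map ξ).prod (μ.map η))| ≤ 2 * F * b := by
  have hξ' : Measurable ξ := hξ.mono hm₁ le_rfl
  have hη' : Measurable η := hη.mono hm₂ le_rfl
  have hζ : Measurable (fun ω => (ξ ω, η ω)) := hξ'.prodMk hη'
  set π : Measure (α × γ) := μ.map (fun ω => (ξ ω, η ω)) with hπdef
  haveI : IsProbabilityMeasure π := Measure.isProbabilityMeasure_map hζ.aemeasurable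
  haveI : IsProbabilityMeasure (μ.map ξ) := Measure.isProbabilityMeasure_map hξ'.aemeasurable
  haveI : IsProbabilityMeasure (μ.map η) := Measure.isProbabilityMeasure_map hη'.aemeasurable
  set ρ : Measure (α × γ) := (μ.map ξ).prod (μ.map η) with hρdef
  have hb0 : 0 ≤ b := by
    have := set_bound hm₁ hm₂ hb hξ hη MeasurableSet.empty
    calc (0:ℝ) ≤ _ := abs_nonneg _
      _ ≤ b := this
  have hgint : ∀ (ν : Measure (α × γ)) [IsFiniteMeasure ν], Integrable g ν := by
    intro ν _
    exact ⟨hg.aestronglyMeasurable, HasFiniteIntegral.of_bounded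
      (C := F) (Filter.Eventually.of_forall fun z => by
        rw [Real.norm_eq_abs]; exact hF z)⟩
  have hstep : ∫ ω, g (ξ ω, η ω) ∂μ = ∫ z, g z ∂π := by
    rw [hπdef, integral_map hζ.aemeasurable hg.aestronglyMeasurable]
  rw [hstep]
  show |∫ z, g z ∂π - ∫ z, g z ∂ρ| ≤ 2 * F * b
  -- Hahn decomposition of `π - ρ`
  obtain ⟨u, hu, h₁, h₂⟩ := hahn_decomposition (μ := π) (ν := ρ)
  have hle₁ : ρ.restrict u ≤ π.restrict u := by
    refine Measure.le_intro fun t ht _ => ?_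
    rw [Measure.restrict_apply ht, Measure.restrict_apply ht]
    exact h₁ _ (ht.inter hu) inter_subset_right
  have hle₂ : π.restrict uᶜ ≤ ρ.restrict uᶜ := by
    refine Measure.le_intro fun t ht _ => ?_
    rw [Measure.restrict_apply ht, Measure.restrict_apply ht]
    exact h₂ _ (ht.inter hu.compl) inter_subset_right
  set ν₁ : Measure (α × γ) := π.restrict u - ρ.restrict u with hν₁
  set ν₂ : Measure (α × γ) := ρ.restrict uᶜ - π.restrict uᶜ with hν₂
  haveI : IsFiniteMeasure ν₁ := isFiniteMeasure_of_le (π.restrict u) Measure.sub_le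
  haveI : IsFiniteMeasure ν₂ := isFiniteMeasure_of_le (ρ.restrict uᶜ) Measure.sub_le
  have hadd₁ : π.restrict u = ρ.restrict u + ν₁ := by
    rw [hν₁, add_comm, Measure.sub_add_cancel_of_le hle₁]
  have hadd₂ : ρ.restrict uᶜ = π.restrict uᶜ + ν₂ := by
    rw [hν₂, add_comm, Measure.sub_add_cancel_of_le hle₂]
  have hsplitπ : ∫ z, g z ∂π = ∫ z, g z ∂(π.restrict u) + ∫ z, g z ∂(π.restrict uᶜ) :=
    (integral_add_compl hu (hgint π)).symm
  have hsplitρ : ∫ z, g z ∂ρ = ∫ z, g z ∂(ρ.restrict u) + ∫ z, g z ∂(ρ.restrict uᶜ) :=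
    (integral_add_compl hu (hgint ρ)).symm
  have hint₁ : ∫ z, g z ∂(π.restrict u) = ∫ z, g z ∂(ρ.restrict u) + ∫ z, g z ∂ν₁ := by
    rw [hadd₁]
    exact integral_add_measure (hgint _) (hgint _)
  have hint₂ : ∫ z, g z ∂(ρ.restrict uᶜ) = ∫ z, g z ∂(π.restrict uᶜ) + ∫ z, g z ∂ν₂ := by
    rw [hadd₂]
    exact integral_add_measure (hgint _) (hgint _)
  have hb₁ : |∫ z, g z ∂ν₁| ≤ F * b := by
    have h5 : ‖∫ z, g z ∂ν₁‖ ≤ F * (ν₁ univ).toReal :=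
      norm_integral_le_of_norm_le_const (Filter.Eventually.of_forall fun z => by
        rw [Real.norm_eq_abs]; exact hF z)
    have h6 : (ν₁ univ).toReal ≤ b := by
      rw [hν₁, Measure.sub_apply MeasurableSet.univ hle₁,
        Measure.restrict_apply MeasurableSet.univ, Measure.restrict_apply MeasurableSet.univ,
        Set.univ_inter]
      have h7 := set_bound hm₁ hm₂ hb hξ hη hu
      rw [← hπdef, ← hρdef] at h7
      rw [ENNReal.toReal_sub_of_le (h₁ u hu subset_rfl) (measure_ne_top _ _)]
      linarith [(abs_le.1 h7).2]
    rw [Real.norm_eq_abs] at h5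
    calc |∫ z, g z ∂ν₁| ≤ F * (ν₁ univ).toReal := h5
      _ ≤ F * b := by exact mul_le_mul_of_nonneg_left h6 hF0
  have hb₂ : |∫ z, g z ∂ν₂| ≤ F * b := by
    have h5 : ‖∫ z, g z ∂ν₂‖ ≤ F * (ν₂ univ).toReal :=
      norm_integral_le_of_norm_le_const (Filter.Eventually.of_forall fun z => by
        rw [Real.norm_eq_abs]; exact hF z)
    have h6 : (ν₂ univ).toReal ≤ b := by
      rw [hν₂, Measure.sub_apply MeasurableSet.univ hle₂,
        Measure.restrict_apply MeasurableSet.univ, Measure.restrict_apply MeasurableSet.univ,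
        Set.univ_inter]
      have h7 := set_bound hm₁ hm₂ hb hξ hη hu.compl
      rw [← hπdef, ← hρdef] at h7
      rw [ENNReal.toReal_sub_of_le (h₂ uᶜ hu.compl subset_rfl) (measure_ne_top _ _)]
      linarith [(abs_le.1 h7).1]
    rw [Real.norm_eq_abs] at h5
    calc |∫ z, g z ∂ν₂| ≤ F * (ν₂ univ).toReal := h5
      _ ≤ F * b := by exact mul_le_mul_of_nonneg_left h6 hF0
  rw [hsplitπ, hsplitρ, hint₁, hint₂]
  have e1 := abs_le.1 hb₁
  have e2 := abs_le.1 hb₂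
  rw [abs_le]
  constructor <;> linarith

end Core

/-! ### `betaMixing` gives a `betaBound` -/

section Beta

variable {Ω : Type*} [mΩ : MeasurableSpace Ω] (μ : Measure Ω) [IsProbabilityMeasure μ]
  (X : ℕ → Ω → ℝ)

/-- The inner set of values in the definition of `betaMixing`. -/
def betaSet (m t : ℕ) : Set ℝ :=
  {c : ℝ |
    ∃ (K L : ℕ) (A : Fin K → Set Ω) (B : Fin L → Set Ω),
      (∀ i, MeasurableSet[sigmaGen X (Set.Icc 1 (t + 1))] (A i)) ∧
      (∀ j, MeasurableSet[sigmaGen X (Set.Ici (t + 1 + m))] (B j)) ∧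
      Pairwise (Function.onFun Disjoint A) ∧
      Pairwise (Function.onFun Disjoint B) ∧
      (⋃ i, A i) = Set.univ ∧ (⋃ j, B j) = Set.univ ∧
      c = (1 / 2) * ∑ i : Fin K, ∑ j : Fin L,
        |(μ (A i ∩ B j)).toReal - (μ (A i)).toReal * (μ (B j)).toReal|}

lemma betaMixing_eq_iSup (m : ℕ) : betaMixing μ X m = ⨆ t : ℕ, sSup (betaSet μ X m t) := rfl

lemma sigmaGen_le (hX : ∀ i, Measurable (X i)) (S : Set ℕ) : sigmaGen X S ≤ mΩ := by
  refine iSup₂_le fun i _ => ?_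
  exact (hX i).comap_le

lemma measurable_sigmaGen {S : Set ℕ} {i : ℕ} (hi : i ∈ S) :
    Measurable[sigmaGen X S] (X i) :=
  Measurable.of_comap_le (le_iSup₂ (f := fun i (_ : i ∈ S) =>
    MeasurableSpace.comap (X i) inferInstance) i hi)

lemma mem_betaSet_le_one (hX : ∀ i, Measurable (X i)) {m t : ℕ} {c : ℝ}
    (hc : c ∈ betaSet μ X m t) : c ≤ 1 := by
  obtain ⟨K, L, A, B, hA, hB, hdA, hdB, huA, huB, rfl⟩ := hc
  have hA' : ∀ i, MeasurableSet (A i) := fun i => sigmaGen_le X hX _ _ (hA i)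
  have hB' : ∀ j, MeasurableSet (B j) := fun j => sigmaGen_le X hX _ _ (hB j)
  have h1 : ∑ i : Fin K, ∑ j : Fin L, |(μ (A i ∩ B j)).toReal
      - (μ (A i)).toReal * (μ (B j)).toReal| ≤ 2 := by
    have hsum1 : ∑ i : Fin K, ∑ j : Fin L, (μ (A i ∩ B j)).toReal = 1 := by
      have h := sum_measure_partition_inter (μ := μ) hA' hB' hdA hdB huA huB
      rw [Fintype.sum_prod_type] at h
      exact h
    have hsum2 : ∑ i : Fin K, ∑ j : Fin L, (μ (A i)).toReal * (μ (B j)).toReal = 1 := by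
      rw [← Finset.sum_mul_sum,
        sum_measure_partition hA' hdA huA, sum_measure_partition hB' hdB huB, one_mul]
    calc ∑ i : Fin K, ∑ j : Fin L, |(μ (A i ∩ B j)).toReal
          - (μ (A i)).toReal * (μ (B j)).toReal|
        ≤ ∑ i : Fin K, ∑ j : Fin L, ((μ (A i ∩ B j)).toReal
          + (μ (A i)).toReal * (μ (B j)).toReal) := by
          refine Finset.sum_le_sum fun i _ => Finset.sum_le_sum fun j _ => ?_
          have := abs_sub ((μ (A i ∩ B j)).toReal) ((μ (A i)).toReal * (μ (B j)).toReal)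
          have h0 : |(μ (A i ∩ B j)).toReal| = (μ (A i ∩ B j)).toReal :=
            abs_of_nonneg ENNReal.toReal_nonneg
          have h0' : |(μ (A i)).toReal * (μ (B j)).toReal|
              = (μ (A i)).toReal * (μ (B j)).toReal :=
            abs_of_nonneg (mul_nonneg ENNReal.toReal_nonneg ENNReal.toReal_nonneg)
          calc |(μ (A i ∩ B j)).toReal - (μ (A i)).toReal * (μ (B j)).toReal|
              ≤ |(μ (A i ∩ B j)).toReal| + |(μ (A i)).toReal * (μ (B j)).toReal| :=
                abs_sub _ _
            _ = (μ (A i ∩ B j)).toReal + (μ (A i)).toReal * (μ (B j)).toReal := by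
                rw [h0, h0']
      _ = 2 := by
          calc ∑ i : Fin K, ∑ j : Fin L, ((μ (A i ∩ B j)).toReal
                + (μ (A i)).toReal * (μ (B j)).toReal)
              = ∑ i : Fin K, (∑ j : Fin L, (μ (A i ∩ B j)).toReal
                + ∑ j : Fin L, (μ (A i)).toReal * (μ (B j)).toReal) :=
                Finset.sum_congr rfl fun i _ => Finset.sum_add_distrib
            _ = ∑ i : Fin K, ∑ j : Fin L, (μ (A i ∩ B j)).toReal
                + ∑ i : Fin K, ∑ j : Fin L, (μ (A i)).toReal * (μ (B j)).toReal :=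
                Finset.sum_add_distrib
            _ = 2 := by rw [hsum1, hsum2]; norm_num
  linarith

lemma zero_mem_betaSet (m t : ℕ) : (0:ℝ) ∈ betaSet μ X m t := by
  refine ⟨1, 1, fun _ => univ, fun _ => univ, fun _ => MeasurableSet.univ,
    fun _ => MeasurableSet.univ, ?_, ?_, ?_, ?_, ?_⟩
  · intro i j hij; exact absurd (Subsingleton.elim i j) hij
  · intro i j hij; exact absurd (Subsingleton.elim i j) hij
  · exact Set.iUnion_const univ
  · exact Set.iUnion_const univ
  · simp [measure_univ]

lemma le_betaMixing (hX : ∀ i, Measurable (X i)) {m t : ℕ} {c : ℝ}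
    (hc : c ∈ betaSet μ X m t) : c ≤ betaMixing μ X m := by
  rw [betaMixing_eq_iSup]
  have hbdd : BddAbove (Set.range fun t => sSup (betaSet μ X m t)) := by
    refine ⟨1, ?_⟩
    rintro x ⟨t', rfl⟩
    exact Real.sSup_le (fun c' hc' => mem_betaSet_le_one μ X hX hc') zero_le_one
  refine le_ciSup_of_le hbdd t ?_
  exact le_csSup ⟨1, fun c' hc' => mem_betaSet_le_one μ X hX hc'⟩ hc

lemma betaMixing_nonneg (hX : ∀ i, Measurable (X i)) (m : ℕ) : 0 ≤ betaMixing μ X m :=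
  le_betaMixing μ X hX (zero_mem_betaSet μ X m 0)

lemma betaBound_sigmaGen (hX : ∀ i, Measurable (X i)) (m t : ℕ) :
    betaBound μ (sigmaGen X (Set.Icc 1 (t + 1))) (sigmaGen X (Set.Ici (t + 1 + m)))
      (betaMixing μ X m) := by
  intro ι κ _ _ A B hA hB hdA hdB huA huB
  refine le_betaMixing μ X hX (t := t) ?_
  refine ⟨Fintype.card ι, Fintype.card κ, A ∘ (Fintype.equivFin ι).symm,
    B ∘ (Fintype.equivFin κ).symm, fun i => hA _, fun j => hB _,
    hdA.comp_of_injective (Fintype.equivFin ι).symm.injective,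
    hdB.comp_of_injective (Fintype.equivFin κ).symm.injective, ?_, ?_, ?_⟩
  · exact ((Fintype.equivFin ι).symm.surjective.iUnion_comp A).trans huA
  · exact ((Fintype.equivFin κ).symm.surjective.iUnion_comp B).trans huB
  · congr 1
    refine Fintype.sum_equiv (Fintype.equivFin ι) _ _ fun i => ?_
    refine Fintype.sum_equiv (Fintype.equivFin κ) _ _ fun j => ?_
    simp only [Function.comp_apply, Equiv.symm_apply_apply]

end Beta

/-! ### Integrability of bounded measurable functions -/

lemma integrable_of_abs_le {δ : Type*} [MeasurableSpace δ] {ν : Measure δ} [IsFiniteMeasure ν]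
    {f : δ → ℝ} {F : ℝ} (hf : Measurable f) (hF : ∀ z, |f z| ≤ F) : Integrable f ν :=
  ⟨hf.aestronglyMeasurable, HasFiniteIntegral.of_bounded (C := F)
    (Filter.Eventually.of_forall fun z => by rw [Real.norm_eq_abs]; exact hF z)⟩

/-! ### Gluing a product of blocks -/

section Glue

variable {s : ℕ} {E : Fin (s + 1) → Type*} [∀ k, MeasurableSpace (E k)]

/-- Glue an `s`-tuple and a last coordinate into an `(s+1)`-tuple. -/
def glue (x : ∀ k : Fin s, E (Fin.castSucc k)) (y : E (Fin.last s)) (k : Fin (s + 1)) : E k :=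
  Fin.lastCases y x k

lemma measurable_glue :
    Measurable (fun q : (∀ k : Fin s, E (Fin.castSucc k)) × E (Fin.last s) => glue q.1 q.2) := by
  refine measurable_pi_lambda _ fun k => ?_
  induction k using Fin.lastCases with
  | last =>
    have : (fun q : (∀ k : Fin s, E (Fin.castSucc k)) × E (Fin.last s) =>
        glue q.1 q.2 (Fin.last s)) = fun q => q.2 := by
      funext q; simp [glue]
    rw [this]; exact measurable_snd
  | cast i =>
    have : (fun q : (∀ k : Fin s, E (Fin.castSucc k)) × E (Fin.last s) =>
        glue q.1 q.2 (Fin.castSucc i)) = fun q => q.1 i := by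
      funext q; simp [glue]
    rw [this]; exact (measurable_pi_apply i).comp measurable_fst

lemma pi_map_glue (ν : ∀ k, Measure (E k)) [∀ k, IsProbabilityMeasure (ν k)] :
    Measure.pi ν = ((Measure.pi (fun k : Fin s => ν (Fin.castSucc k))).prod
      (ν (Fin.last s))).map (fun q => glue q.1 q.2) := by
  refine Measure.pi_eq fun t ht => ?_
  rw [Measure.map_apply measurable_glue (MeasurableSet.univ_pi ht)]
  have hpre : (fun q : (∀ k : Fin s, E (Fin.castSucc k)) × E (Fin.last s) =>
      glue q.1 q.2) ⁻¹' (Set.univ.pi t)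
      = (Set.univ.pi fun k : Fin s => t (Fin.castSucc k)) ×ˢ t (Fin.last s) := by
    ext ⟨x, y⟩
    simp only [Set.mem_preimage, Set.mem_pi, Set.mem_univ, true_implies, Set.mem_prod]
    rw [Fin.forall_fin_succ']
    simp [glue]
  rw [hpre, Measure.prod_prod, Measure.pi_pi, Fin.prod_univ_castSucc]

end Glue

/-! ### Ordering of the blocks -/

lemma block_chain {w m : ℕ} (H : Fin w → Finset ℕ) (hne : ∀ k, (H k).Nonempty)
    (hgap : ∀ (k : ℕ) (hk : k + 1 < w), ∀ i ∈ H ⟨k, Nat.lt_of_succ_lt hk⟩,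
      ∀ j ∈ H ⟨k + 1, hk⟩, i + m < j) :
    ∀ (b a : ℕ) (hab : a < b) (hb : b < w), ∀ i ∈ H ⟨a, lt_trans hab hb⟩, ∀ j ∈ H ⟨b, hb⟩,
      i + m < j := by
  intro b
  induction b with
  | zero => intro a hab; omega
  | succ b ih =>
    intro a hab hb i hi j hj
    rcases Nat.lt_succ_iff_lt_or_eq.1 hab with hlt | heq
    · obtain ⟨z, hz⟩ := hne ⟨b, Nat.lt_of_succ_lt hb⟩
      have h1 := ih a hlt (Nat.lt_of_succ_lt hb) i hi z hz
      have h2 := hgap b hb z hz j hj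
      omega
    · subst heq
      exact hgap a hb i hi j hj

/-- Helper: pi-measurability with an explicit source σ-algebra. -/
lemma measurable_pi_mk {Ω : Type*} {δ : Type*} {π : δ → Type*} (mm : MeasurableSpace Ω)
    [∀ a, MeasurableSpace (π a)] {g : Ω → ∀ a, π a}
    (hg : ∀ a, Measurable[mm] fun x => g x a) : Measurable[mm] g :=
  measurable_pi_lambda g hg

/-! ### The main induction -/

lemma main_bound {Ω : Type*} [mΩ : MeasurableSpace Ω] (μ : Measure Ω) [IsProbabilityMeasure μ]
    (X : ℕ → Ω → ℝ) (hX : ∀ t, Measurable (X t)) (m : ℕ) :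
    ∀ (s : ℕ) (H : Fin s → Finset ℕ),
      (∀ k, (H k).Nonempty) → (∀ k, ∀ i ∈ H k, 1 ≤ i) →
      (∀ (k : ℕ) (hk : k + 1 < s), ∀ i ∈ H ⟨k, Nat.lt_of_succ_lt hk⟩,
        ∀ j ∈ H ⟨k + 1, hk⟩, i + m < j) →
      ∀ (h : (∀ k : Fin s, ↥(H k) → ℝ) → ℝ), Measurable h →
      ∀ (F : ℝ), 0 ≤ F → (∀ x, |h x| ≤ F) →
      |∫ ω, h (fun k i => X i.1 ω) ∂μ
        - ∫ y, h y ∂(Measure.pi fun k => μ.map (fun ω (i : ↥(H k)) => X i.1 ω))|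
        ≤ 2 * s * F * betaMixing μ X m := by
  intro s
  induction s with
  | zero =>
    intro H hne hpos hgap h hh F hF0 hFb
    haveI : ∀ k : Fin 0, IsProbabilityMeasure (μ.map (fun ω (i : ↥(H k)) => X i.1 ω)) :=
      fun k => Measure.isProbabilityMeasure_map
        (measurable_pi_lambda (fun ω (i : ↥(H k)) => X i.1 ω) fun i => hX i.1).aemeasurable
    have h1 : (fun ω : Ω => h (fun k i => X i.1 ω)) = fun _ => h (fun k => k.elim0) :=
      funext fun ω => congrArg h (funext fun k => k.elim0)
    have h2 : (fun y : ∀ k : Fin 0, ↥(H k) → ℝ => h y) = fun _ => h (fun k => k.elim0) :=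
      funext fun y => congrArg h (Subsingleton.elim _ _)
    rw [h1, h2, integral_const, integral_const]
    simp [measure_univ]
  | succ s ih =>
    intro H hne hpos hgap h hh F hF0 hFb
    set β := betaMixing μ X m with hβ
    have hβ0 : 0 ≤ β := betaMixing_nonneg μ X hX m
    -- notation for the blocks
    set ξ : Ω → (∀ k : Fin s, ↥(H (Fin.castSucc k)) → ℝ) := fun ω k i => X i.1 ω with hξdef
    set η : Ω → (↥(H (Fin.last s)) → ℝ) := fun ω i => X i.1 ω with hηdef
    have hξmeas : Measurable ξ := by
      rw [measurable_pi_iff]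
      intro k
      rw [measurable_pi_iff]
      intro i
      exact hX i.1
    have hηmeas : Measurable η := by
      rw [measurable_pi_iff]
      intro i
      exact hX i.1
    set g : (∀ k : Fin s, ↥(H (Fin.castSucc k)) → ℝ) × (↥(H (Fin.last s)) → ℝ) → ℝ :=
      fun q => h (glue q.1 q.2) with hgdef
    have hg : Measurable g := hh.comp measurable_glue
    have hgb : ∀ q, |g q| ≤ F := fun q => hFb _
    -- the first integral is `∫ g (ξ ω, η ω)`
    have hT1 : ∫ ω, h (fun k i => X i.1 ω) ∂μ = ∫ ω, g (ξ ω, η ω) ∂μ := by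
      refine integral_congr_ae (Filter.Eventually.of_forall fun ω => ?_)
      refine congrArg h (funext fun k => ?_)
      induction k using Fin.lastCases with
      | last => simp [glue, hξdef, hηdef]
      | cast i => simp [glue, hξdef, hηdef]
    -- the measures
    haveI : ∀ k : Fin (s+1), IsProbabilityMeasure (μ.map (fun ω (i : ↥(H k)) => X i.1 ω)) :=
      fun k => Measure.isProbabilityMeasure_map
        (measurable_pi_lambda (fun ω (i : ↥(H k)) => X i.1 ω) fun i => hX i.1).aemeasurable
    haveI : IsProbabilityMeasure (μ.map ξ) := Measure.isProbabilityMeasure_map hξmeas.aemeasurable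
    haveI : IsProbabilityMeasure (μ.map η) := Measure.isProbabilityMeasure_map hηmeas.aemeasurable
    set νfirst : Measure (∀ k : Fin s, ↥(H (Fin.castSucc k)) → ℝ) :=
      Measure.pi (fun k : Fin s => μ.map (fun ω (i : ↥(H (Fin.castSucc k))) => X i.1 ω))
      with hνfirst
    haveI : IsProbabilityMeasure νfirst := by
      rw [hνfirst]; infer_instance
    -- Step 1 : pair bound (or equality when `s = 0`)
    have hstep1 : |∫ ω, g (ξ ω, η ω) ∂μ
        - ∫ z, g z ∂((μ.map ξ).prod (μ.map η))| ≤ 2 * F * β := by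
      rcases Nat.eq_zero_or_pos s with rfl | hs
      · -- single block: `ξ` is trivial
        have hconst : ∀ ω, ξ ω = default := fun ω => Subsingleton.elim _ _
        have hzero : ∫ ω, g (ξ ω, η ω) ∂μ = ∫ z, g z ∂((μ.map ξ).prod (μ.map η)) := by
          rw [integral_prod _ (integrable_of_abs_le hg hgb)]
          have h3 : ∀ x, ∫ y, g (x, y) ∂(μ.map η) = ∫ y, g (default, y) ∂(μ.map η) :=
            fun x => by rw [Subsingleton.elim x default]
          have h4 : ∫ x, ∫ y, g (x, y) ∂(μ.map η) ∂(μ.map ξ)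
              = ∫ y, g (default, y) ∂(μ.map η) := by
            simp_rw [h3]
            rw [integral_const, probReal_univ, one_smul]
          rw [h4, integral_map (f := fun y => g (default, y)) hηmeas.aemeasurable
            ((hg.comp measurable_prodMk_left).aestronglyMeasurable)]
          refine integral_congr_ae (Filter.Eventually.of_forall fun ω => ?_)
          show g (ξ ω, η ω) = g (default, η ω)
          rw [hconst ω]
        rw [hzero, sub_self, abs_zero]
        positivity
      · -- at least one earlier block: use the pair bound
        set prev : Fin (s+1) := ⟨s - 1, by omega⟩ with hprev
        set M : ℕ := (H prev).max' (hne prev) with hM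
        have hM1 : 1 ≤ M := hpos prev M ((H prev).max'_mem (hne prev))
        set t' : ℕ := M - 1 with ht'
        have hMt : t' + 1 = M := by omega
        -- ξ is measurable w.r.t. the past σ-algebra
        have hξm : Measurable[sigmaGen X (Set.Icc 1 (t' + 1))] ξ := by
          refine measurable_pi_mk _ fun k => ?_
          refine measurable_pi_mk _ fun i => ?_
          refine measurable_sigmaGen X ?_
          have hi1 : 1 ≤ i.1 := hpos _ _ i.2
          have hiM : i.1 ≤ M := by
            rcases Nat.lt_or_ge k.1 (s - 1) with hlt | hge
            · have := block_chain H hne hgap (s - 1) k.1 hlt (by omega) i.1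
                (by
                  have : H (Fin.castSucc k) = H ⟨k.1, by omega⟩ := rfl
                  rw [← this]; exact i.2) M
                (by
                  have : H prev = H ⟨s - 1, by omega⟩ := rfl
                  rw [← this]; exact (H prev).max'_mem (hne prev))
              omega
            · have hkeq : Fin.castSucc k = prev := by
                apply Fin.ext
                simp only [Fin.coe_castSucc, hprev]
                omega
              refine (H prev).le_max' i.1 ?_
              rw [← hkeq]; exact i.2
          simp only [Set.mem_Icc]
          omega
        -- η is measurable w.r.t. the future σ-algebra
        have hηm : Measurable[sigmaGen X (Set.Ici (t' + 1 + m))] η := by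
          refine measurable_pi_mk _ fun i => ?_
          refine measurable_sigmaGen X ?_
          have hgap' := hgap (s - 1) (by omega) M
            (by
              have : H prev = H ⟨s - 1, by omega⟩ := rfl
              rw [← this]; exact (H prev).max'_mem (hne prev)) i.1
            (by
              have : H (Fin.last s) = H ⟨s - 1 + 1, by omega⟩ := by
                congr 1
                apply Fin.ext
                simp only [Fin.val_last]
                omega
              rw [← this]; exact i.2)
          simp only [Set.mem_Ici]
          omega
        exact pair_bound (sigmaGen_le X hX _) (sigmaGen_le X hX _)
          (betaBound_sigmaGen μ X hX m t') hξm hηm g hg F hgb hF0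
    -- Step 2 : replace the law of the first `s` blocks by the product measure
    have hstep2 : |∫ z, g z ∂((μ.map ξ).prod (μ.map η))
        - ∫ z, g z ∂(νfirst.prod (μ.map η))| ≤ 2 * s * F * β := by
      rw [integral_prod_symm _ (integrable_of_abs_le hg hgb),
        integral_prod_symm _ (integrable_of_abs_le hg hgb)]
      have hinner : ∀ y, |∫ x, g (x, y) ∂(μ.map ξ) - ∫ x, g (x, y) ∂νfirst|
          ≤ 2 * s * F * β := by
        intro y
        have hmapint : ∫ x, g (x, y) ∂(μ.map ξ) = ∫ ω, g (ξ ω, y) ∂μ :=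
          integral_map (f := fun x => g (x, y)) hξmeas.aemeasurable
            (hg.comp measurable_prodMk_right).aestronglyMeasurable
        have hih := ih (fun k => H (Fin.castSucc k)) (fun k => hne _) (fun k => hpos _)
          (fun k hk => hgap k (by omega)) (fun x => g (x, y))
          (hg.comp measurable_prodMk_right) F hF0 (fun x => hgb _)
        rw [hmapint]
        exact hih
      have hmeas1 : AEStronglyMeasurable (fun y => ∫ x, g (x, y) ∂(μ.map ξ)) (μ.map η) :=
        (hg.stronglyMeasurable.integral_prod_left').aestronglyMeasurable
      have hmeas2 : AEStronglyMeasurable (fun y => ∫ x, g (x, y) ∂νfirst) (μ.map η) :=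
        (hg.stronglyMeasurable.integral_prod_left').aestronglyMeasurable
      have hbnd : ∀ (ν' : Measure (∀ k : Fin s, ↥(H (Fin.castSucc k)) → ℝ))
          [IsProbabilityMeasure ν'], ∀ y, |∫ x, g (x, y) ∂ν'| ≤ F := by
        intro ν' _ y
        have := norm_integral_le_of_norm_le_const (μ := ν') (f := fun x => g (x, y)) (C := F)
          (Filter.Eventually.of_forall fun x => by rw [Real.norm_eq_abs]; exact hgb _)
        rwa [probReal_univ, mul_one, Real.norm_eq_abs] at this
      have hint1 : Integrable (fun y => ∫ x, g (x, y) ∂(μ.map ξ)) (μ.map η) :=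
        ⟨hmeas1, HasFiniteIntegral.of_bounded (C := F)
          (Filter.Eventually.of_forall fun y => by
            rw [Real.norm_eq_abs]; exact hbnd _ y)⟩
      have hint2 : Integrable (fun y => ∫ x, g (x, y) ∂νfirst) (μ.map η) :=
        ⟨hmeas2, HasFiniteIntegral.of_bounded (C := F)
          (Filter.Eventually.of_forall fun y => by
            rw [Real.norm_eq_abs]; exact hbnd _ y)⟩
      rw [← integral_sub hint1 hint2]
      have := norm_integral_le_of_norm_le_const (μ := μ.map η)
        (f := fun y => ∫ x, g (x, y) ∂(μ.map ξ) - ∫ x, g (x, y) ∂νfirst)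
        (C := 2 * s * F * β)
        (Filter.Eventually.of_forall fun y => by rw [Real.norm_eq_abs]; exact hinner y)
      rwa [probReal_univ, mul_one, Real.norm_eq_abs] at this
    -- Step 3 : the product measure is the `pi` measure
    have hstep3 : ∫ z, g z ∂(νfirst.prod (μ.map η))
        = ∫ y, h y ∂(Measure.pi fun k : Fin (s+1) => μ.map (fun ω (i : ↥(H k)) => X i.1 ω)) := by
      rw [pi_map_glue (fun k : Fin (s+1) => μ.map (fun ω (i : ↥(H k)) => X i.1 ω)),
        integral_map measurable_glue.aemeasurable hh.aestronglyMeasurable]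
    rw [hT1, ← hstep3]
    have htri : |∫ ω, g (ξ ω, η ω) ∂μ - ∫ z, g z ∂(νfirst.prod (μ.map η))|
        ≤ |∫ ω, g (ξ ω, η ω) ∂μ - ∫ z, g z ∂((μ.map ξ).prod (μ.map η))|
          + |∫ z, g z ∂((μ.map ξ).prod (μ.map η)) - ∫ z, g z ∂(νfirst.prod (μ.map η))| :=
      abs_sub_le _ _ _
    have hcast : (2 : ℝ) * (↑(s+1)) * F * β = 2 * F * β + 2 * s * F * β := by
      push_cast
      ring
    rw [hcast]
    linarith

end YoshiharaAux

open YoshiharaAux in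
/-- Yoshihara's lemma: replacing well-separated blocks `X(H_1), …, X(H_s)` of a
stationary absolutely regular sequence by independent copies changes the expectation
of a bounded measurable function by at most `4 s F β(m)`. -/
theorem yoshihara_blocks_lemma
    {Ω Ω' : Type*} [MeasurableSpace Ω] [MeasurableSpace Ω']
    (μ : Measure Ω) (μ' : Measure Ω')
    [IsProbabilityMeasure μ] [IsProbabilityMeasure μ']
    (X : ℕ → Ω → ℝ) (hXmeas : ∀ t, Measurable (X t))
    (hstat : IsStrictlyStationary μ X)
    (m : ℕ) (hm : 1 ≤ m) (s : ℕ) (hs : 1 ≤ s)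
    (H : Fin s → Finset ℕ)
    (hne : ∀ k, (H k).Nonempty) (hpos : ∀ k, ∀ i ∈ H k, 1 ≤ i)
    -- the blocks are increasing, with gaps larger than `m`:
    -- `max H_k + m < min H_{k+1}`
    (hgap : ∀ (k : ℕ) (hk : k + 1 < s), ∀ i ∈ H ⟨k, Nat.lt_of_succ_lt hk⟩,
      ∀ j ∈ H ⟨k + 1, hk⟩, i + m < j)
    -- `Y k` is an independent copy of the block `X(H_k) = (X_i : i ∈ H_k)`
    (Y : ∀ k : Fin s, Ω' → (↥(H k) → ℝ))
    (hYmeas : ∀ k, Measurable (Y k))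
    (hindep : iIndepFun Y μ')
    (hdist : ∀ k, μ'.map (Y k) = μ.map (fun ω (i : ↥(H k)) => X i.1 ω))
    -- a bounded measurable function of the variables of all blocks
    (h : (∀ k : Fin s, ↥(H k) → ℝ) → ℝ) (hhmeas : Measurable h)
    (F : ℝ) (hFb : ∀ x, |h x| ≤ F) :
    |∫ ω, h (fun k i => X i.1 ω) ∂μ - ∫ ω', h (fun k => Y k ω') ∂μ'| ≤
      4 * s * F * betaMixing μ X m := by
  have hF0 : 0 ≤ F := le_trans (abs_nonneg _) (hFb (Classical.arbitrary _))
  have hβ0 : 0 ≤ betaMixing μ X m := betaMixing_nonneg μ X hXmeas m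
  -- the law of the `Y` tuple is the product of the block laws
  haveI : ∀ k, IsProbabilityMeasure (μ'.map (Y k)) :=
    fun k => Measure.isProbabilityMeasure_map (hYmeas k).aemeasurable
  have hYtuple : μ'.map (fun ω' k => Y k ω') = Measure.pi (fun k => μ'.map (Y k)) := by
    refine (Measure.pi_eq fun t ht => ?_).symm
    rw [Measure.map_apply (measurable_pi_lambda _ fun k => hYmeas k)
      (MeasurableSet.univ_pi ht)]
    have hpre : (fun ω' k => Y k ω') ⁻¹' (Set.univ.pi t) = ⋂ k, Y k ⁻¹' t k := by
      ext ω'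
      simp [Set.mem_pi]
    have hbint : ⋂ k ∈ Finset.univ, Y k ⁻¹' t k = ⋂ k, Y k ⁻¹' t k := by
      simp
    rw [hpre, ← hbint, hindep.measure_inter_preimage_eq_mul Finset.univ (fun k _ => ht k)]
    refine Finset.prod_congr rfl fun k _ => ?_
    rw [Measure.map_apply (hYmeas k) (ht k)]
  have hYint : ∫ ω', h (fun k => Y k ω') ∂μ'
      = ∫ y, h y ∂(Measure.pi fun k => μ.map (fun ω (i : ↥(H k)) => X i.1 ω)) := by
    have h1 : ∫ ω', h (fun k => Y k ω') ∂μ' = ∫ y, h y ∂(μ'.map (fun ω' k => Y k ω')) :=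
      (integral_map (measurable_pi_lambda _ fun k => hYmeas k).aemeasurable
        hhmeas.aestronglyMeasurable).symm
    rw [h1, hYtuple]
    rw [congrArg Measure.pi (funext fun k => hdist k :
      (fun k => μ'.map (Y k)) = fun k => μ.map (fun ω (i : ↥(H k)) => X i.1 ω))]
  rw [hYint]
  have hmain := main_bound μ X hXmeas m s H hne hpos hgap h hhmeas F hF0 hFb
  refine le_trans hmain ?_
  have hss : (2 : ℝ) * s * F * betaMixing μ X m ≤ 4 * s * F * betaMixing μ X m := by
    have hs0 : (0:ℝ) ≤ s := Nat.cast_nonneg s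
    nlinarith [mul_nonneg (mul_nonneg hs0 hF0) hβ0]
  exact hss
end
end

section
/- Fix integers n ≥ r ≥ 1 and m ≥ 1. For an increasing r-tuple α = (j_1,…,j_r) with 1 ≤ j_1 < … < j_r ≤ n, the number of increasing r-tuples α̃ = (j̃_1,…,j̃_r) with 1 ≤ j̃_1 < … < j̃_r ≤ n such that |j_k − j̃_l| ≤ m for at least one pair (k, l) with k, l ∈ {1,…,r} is at most r² (2m+1) C(n, r−1), where C(n, r−1) is the binomial coefficient. -/
/-- The finset of strictly increasing `r`-tuples `(j 1, …, j r)` with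
`1 ≤ j 1 < ⋯ < j r ≤ n`. -/
def incTuples (r n : ℕ) : Finset (Fin r → ℕ) :=
  (Fintype.piFinset fun _ : Fin r => Finset.Icc 1 n).filter
    fun j => ∀ a b : Fin r, a < b → j a < j b

lemma incTuples_strictMono {r n : ℕ} {β : Fin r → ℕ} (h : β ∈ incTuples r n) :
    StrictMono β := fun a b hab => (Finset.mem_filter.mp h).2 a b hab

lemma fiber_card_le (r n : ℕ) (l : Fin r) (v : ℕ) :
    ((incTuples r n).filter (fun β => β l = v)).card ≤ n.choose (r - 1) := by
  classical
  have hchoose : ((Finset.Icc 1 n).powersetCard (r - 1)).card = n.choose (r - 1) := by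
    rw [Finset.card_powersetCard, Nat.card_Icc]
    simp
  rw [← hchoose]
  apply Finset.card_le_card_of_injOn (fun β => (Finset.image β Finset.univ).erase v)
  · intro β hβ
    simp only [Finset.mem_coe, Finset.mem_filter] at hβ ⊢
    obtain ⟨hβmem, hβv⟩ := hβ
    have hmono := incTuples_strictMono hβmem
    have hmem : ∀ i, β i ∈ Finset.Icc 1 n := fun i =>
      (Fintype.mem_piFinset.mp (Finset.mem_filter.mp hβmem).1) i
    have hcard : (Finset.image β Finset.univ).card = r := by
      rw [Finset.card_image_of_injective _ hmono.injective, Finset.card_univ,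
        Fintype.card_fin]
    rw [Finset.mem_powersetCard]
    constructor
    · intro x hx
      obtain ⟨i, _, rfl⟩ := Finset.mem_image.mp (Finset.mem_of_mem_erase hx)
      exact hmem i
    · rw [Finset.card_erase_of_mem, hcard]
      subst hβv
      exact Finset.mem_image_of_mem β (Finset.mem_univ l)
  · intro β hβ β' hβ' heq
    simp only [Finset.mem_coe, Finset.mem_filter] at hβ hβ'
    obtain ⟨hβ1, hβ2⟩ := hβ
    obtain ⟨hβ'1, hβ'2⟩ := hβ'
    have hmono := incTuples_strictMono hβ1
    have hmono' := incTuples_strictMono hβ'1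
    have h1 : v ∈ Finset.image β Finset.univ :=
      hβ2 ▸ Finset.mem_image_of_mem β (Finset.mem_univ l)
    have h2 : v ∈ Finset.image β' Finset.univ :=
      hβ'2 ▸ Finset.mem_image_of_mem β' (Finset.mem_univ l)
    have himg : Finset.image β Finset.univ = Finset.image β' Finset.univ := by
      rw [← Finset.insert_erase h1, ← Finset.insert_erase h2]
      exact congrArg (insert v) heq
    have hcard : (Finset.image β Finset.univ).card = r := by
      rw [Finset.card_image_of_injective _ hmono.injective, Finset.card_univ,
        Fintype.card_fin]
    have e1 : β = fun i => (Finset.image β Finset.univ).orderEmbOfFin hcard i :=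
      Finset.orderEmbOfFin_unique hcard
        (fun i => Finset.mem_image_of_mem β (Finset.mem_univ i)) hmono
    have e2 : β' = fun i => (Finset.image β Finset.univ).orderEmbOfFin hcard i :=
      Finset.orderEmbOfFin_unique hcard
        (fun i => himg ▸ Finset.mem_image_of_mem β' (Finset.mem_univ i)) hmono'
    rw [e1, e2]

/-- Degree bound in the characterizing graph `Γ_{n,m}` for `U`-statistics: the number of
increasing `r`-tuples having some coordinate within distance `m` of some coordinate of a
fixed increasing `r`-tuple `α` is at most `r² (2m+1) C(n, r-1)`. -/
theorem strong_dependence_degree_bound_U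
    (n r m : ℕ) (hr : 1 ≤ r) (hrn : r ≤ n) (hm : 1 ≤ m)
    (α : Fin r → ℕ) (hα : α ∈ incTuples r n) :
    ((incTuples r n).filter
        (fun β => ∃ k l : Fin r, |(α k : ℤ) - (β l : ℤ)| ≤ (m : ℤ))).card ≤
      r ^ 2 * (2 * m + 1) * n.choose (r - 1) := by
  classical
  have hsub : ((incTuples r n).filter
        (fun β => ∃ k l : Fin r, |(α k : ℤ) - (β l : ℤ)| ≤ (m : ℤ))) ⊆
      Finset.univ.biUnion (fun k : Fin r => Finset.univ.biUnion (fun l : Fin r =>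
        (Finset.Icc (α k - m) (α k + m)).biUnion
          (fun v => (incTuples r n).filter (fun β => β l = v)))) := by
    intro β hβ
    simp only [Finset.mem_filter] at hβ
    obtain ⟨hβ1, k, l, hkl⟩ := hβ
    simp only [Finset.mem_biUnion, Finset.mem_univ, true_and]
    refine ⟨k, l, β l, ?_, ?_⟩
    · rw [Finset.mem_Icc]
      rw [abs_sub_le_iff] at hkl
      omega
    · simp [hβ1]
  calc ((incTuples r n).filter
        (fun β => ∃ k l : Fin r, |(α k : ℤ) - (β l : ℤ)| ≤ (m : ℤ))).card
      ≤ _ := Finset.card_le_card hsub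
    _ ≤ ∑ k : Fin r, ∑ l : Fin r, ∑ v ∈ Finset.Icc (α k - m) (α k + m),
          ((incTuples r n).filter (fun β => β l = v)).card :=
        le_trans Finset.card_biUnion_le (Finset.sum_le_sum fun k _ =>
          le_trans Finset.card_biUnion_le (Finset.sum_le_sum fun l _ =>
            Finset.card_biUnion_le))
    _ ≤ ∑ k : Fin r, ∑ l : Fin r, (2 * m + 1) * n.choose (r - 1) := by
        apply Finset.sum_le_sum
        intro k _
        apply Finset.sum_le_sum
        intro l _
        calc ∑ v ∈ Finset.Icc (α k - m) (α k + m),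
              ((incTuples r n).filter (fun β => β l = v)).card
            ≤ ∑ _v ∈ Finset.Icc (α k - m) (α k + m), n.choose (r - 1) :=
              Finset.sum_le_sum fun v _ => fiber_card_le r n l v
          _ = (Finset.Icc (α k - m) (α k + m)).card * n.choose (r - 1) := by
              rw [Finset.sum_const, smul_eq_mul]
          _ ≤ (2 * m + 1) * n.choose (r - 1) := by
              apply Nat.mul_le_mul_right
              rw [Nat.card_Icc]
              omega
    _ = r ^ 2 * (2 * m + 1) * n.choose (r - 1) := by
        simp [Finset.sum_const, Finset.card_univ]
        ring
end

section
/- Fix integers n ≥ r ≥ 1 and m ≥ 1, and let V' be a finite set of increasing r-tuples (j_1,…,j_r) with 1 ≤ j_1 < … < j_r ≤ n. Define L(V') to be the set of increasing r-tuples α̃ = (j̃_1,…,j̃_r), 1 ≤ j̃_1 < … < j̃_r ≤ n, such that for some α = (j_1,…,j_r) ∈ V' one has |j_k − j̃_l| ≤ m for at least one pair k, l ∈ {1,…,r}. Then |L(V')| ≤ r² |V'| (2m+1) C(n, r−1), where C(n, r−1) is the binomial coefficient. -/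
lemma incTuples_mem_Icc {r n : ℕ} {β : Fin r → ℕ} (h : β ∈ incTuples r n) (i : Fin r) :
    β i ∈ Finset.Icc 1 n := by
  have := (Finset.mem_filter.mp h).1
  rw [Fintype.mem_piFinset] at this
  exact this i

lemma fiber_card (n r : ℕ) (l : Fin r) (t : ℕ) :
    ((incTuples r n).filter (fun β => β l = t)).card ≤ n.choose (r - 1) := by
  classical
  have h : n.choose (r-1) = (Finset.powersetCard (r-1) (Finset.Icc 1 n)).card := by
    rw [Finset.card_powersetCard, Nat.card_Icc]; simp
  rw [h]
  apply Finset.card_le_card_of_injOn (fun β => (Finset.univ.erase l).image β)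
  · intro β hβ
    rw [Finset.mem_coe, Finset.mem_filter] at hβ
    obtain ⟨hβ, hβl⟩ := hβ
    rw [Finset.mem_coe, Finset.mem_powersetCard]
    constructor
    · intro x hx
      rw [Finset.mem_image] at hx
      obtain ⟨i, _, rfl⟩ := hx
      exact incTuples_mem_Icc hβ i
    · rw [Finset.card_image_of_injOn ((incTuples_strictMono hβ).injective.injOn),
        Finset.card_erase_of_mem (Finset.mem_univ l)]
      simp
  · intro β hβ β' hβ' him
    rw [Finset.mem_coe, Finset.mem_filter] at hβ hβ'
    obtain ⟨hβ, hβl⟩ := hβ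
    obtain ⟨hβ', hβ'l⟩ := hβ'
    simp only at him
    have hu : (Finset.univ : Finset (Fin r)) = insert l (Finset.univ.erase l) :=
      (Finset.insert_erase (Finset.mem_univ l)).symm
    have hs : Finset.image β Finset.univ = Finset.image β' Finset.univ := by
      rw [hu, Finset.image_insert, Finset.image_insert, hβl, hβ'l, him]
    have hcard : (Finset.image β Finset.univ).card = r := by
      rw [Finset.card_image_of_injOn ((incTuples_strictMono hβ).injective.injOn)]
      simp
    have e1 := Finset.orderEmbOfFin_unique hcard
      (f := β) (fun x => Finset.mem_image_of_mem β (Finset.mem_univ x))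
      (incTuples_strictMono hβ)
    have e2 := Finset.orderEmbOfFin_unique hcard
      (f := β') (fun x => hs ▸ Finset.mem_image_of_mem β' (Finset.mem_univ x))
      (incTuples_strictMono hβ')
    rw [e1, e2]


/-- Bound on the set of strong dependencies `L(V')` in the characterizing graph
`Γ_{n,m}` for `U`-statistics: `|L(V')| ≤ r² |V'| (2m+1) C(n, r-1)`. -/
theorem strong_dependence_set_bound_U
    (n r m : ℕ) (hr : 1 ≤ r) (hrn : r ≤ n) (hm : 1 ≤ m)
    (V' : Finset (Fin r → ℕ)) (hV' : V' ⊆ incTuples r n) :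
    ((incTuples r n).filter
        (fun β => ∃ α ∈ V', ∃ k l : Fin r, |(α k : ℤ) - (β l : ℤ)| ≤ (m : ℤ))).card ≤
      r ^ 2 * V'.card * (2 * m + 1) * n.choose (r - 1) := by
  classical
  have hsub : ((incTuples r n).filter
        (fun β => ∃ α ∈ V', ∃ k l : Fin r, |(α k : ℤ) - (β l : ℤ)| ≤ (m : ℤ))) ⊆
      V'.biUnion (fun α => Finset.univ.biUnion fun k : Fin r =>
      Finset.univ.biUnion fun l : Fin r =>
      (Finset.Icc (α k - m) (α k + m)).biUnion fun t =>
        (incTuples r n).filter (fun β => β l = t)) := by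
    intro β hβ
    rw [Finset.mem_filter] at hβ
    obtain ⟨hβinc, α, hα, k, l, habs⟩ := hβ
    rw [abs_le] at habs
    simp only [Finset.mem_biUnion, Finset.mem_univ, true_and, Finset.mem_filter,
      Finset.mem_Icc]
    exact ⟨α, hα, k, l, β l, ⟨by omega, by omega⟩, hβinc, rfl⟩
  have hicc : ∀ (a : ℕ), (Finset.Icc (a - m) (a + m)).card ≤ 2 * m + 1 := by
    intro a; rw [Nat.card_Icc]; omega
  have h1 : ∀ (α : Fin r → ℕ) (l : Fin r) (a : ℕ),
      ((Finset.Icc (a - m) (a + m)).biUnion fun t =>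
        (incTuples r n).filter (fun β => β l = t)).card ≤ (2*m+1) * n.choose (r-1) := by
    intro α l a
    refine le_trans Finset.card_biUnion_le ?_
    refine le_trans (Finset.sum_le_card_nsmul _ _ (n.choose (r-1))
      (fun t _ => fiber_card n r l t)) ?_
    rw [smul_eq_mul]
    exact Nat.mul_le_mul_right _ (hicc a)
  have h2 : ∀ α : Fin r → ℕ,
      (Finset.univ.biUnion fun k : Fin r =>
        Finset.univ.biUnion fun l : Fin r =>
        (Finset.Icc (α k - m) (α k + m)).biUnion fun t =>
          (incTuples r n).filter (fun β => β l = t)).card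
        ≤ r * (r * ((2*m+1) * n.choose (r-1))) := by
    intro α
    refine le_trans Finset.card_biUnion_le ?_
    refine le_trans (Finset.sum_le_card_nsmul _ _ (r * ((2*m+1) * n.choose (r-1)))
      (fun k _ => ?_)) (by simp [smul_eq_mul])
    refine le_trans Finset.card_biUnion_le ?_
    refine le_trans (Finset.sum_le_card_nsmul _ _ ((2*m+1) * n.choose (r-1))
      (fun l _ => h1 α l (α k))) (by simp [smul_eq_mul])
  calc ((incTuples r n).filter
        (fun β => ∃ α ∈ V', ∃ k l : Fin r, |(α k : ℤ) - (β l : ℤ)| ≤ (m : ℤ))).card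
      ≤ _ := Finset.card_le_card hsub
    _ ≤ _ := Finset.card_biUnion_le
    _ ≤ V'.card * (r * (r * ((2*m+1) * n.choose (r-1)))) := by
        refine le_trans (Finset.sum_le_card_nsmul _ _ _ (fun α _ => h2 α)) ?_
        rw [smul_eq_mul]
    _ = r ^ 2 * V'.card * (2 * m + 1) * n.choose (r - 1) := by ring
end
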